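/- Internal dynamics of the augmented anti-windup controller under input saturation: Let A ∈ ℝ^{n×n}, B ∈ ℝ^{n×m}, T ≥ 1, N ≥ 1, τ ∈ ℕ, levels 0 = η_0 ≤ η_1 ≤ … ≤ η_N, and for each i ∈ {1,…,N} matrices (R^i, M^i) satisfying the SLS feasibility conditions for (A,B) with horizon T, with the input-safety bound Σ_{i=1}^N (η_i − η_{i−1}) ‖[M^i_T ⋯ M^i_1]‖ ≤ u_max. Let P_η be the saturation projection, define the blended maps Ψu_t(ŵ_{t:0}) = Σ_{i=1}^N Σ_{k=1}^{min(t+1,T)} M^i_k (P_{η_i} − P_{η_{i−1}})(ŵ_{t+1−k}) and the augmented state map Ψxa_t(ŵ_{t:0}) = Σ_{i=1}^N Σ_{k=1}^{min(t+1,T)} R^i_k (P_{η_i} − P_{η_{i−1}})(ŵ_{t+1−k}) + Σ_{k=1}^{min(τ+1,t+1)} A^{k−1}(ŵ_{t+1−k} − P_{η_N}(ŵ_{t+1−k})). Consider the saturated closed loop: x_0 = w_0, x_t = A x_{t−1} + B P_{u_max}(u_{t−1}) + w_t for t ≥ 1, with controller u_t = Ψu_t(ŵ_t,…,ŵ_0),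 ŵ_0 = x_0, ŵ_{t+1} = x_{t+1} − Ψxa_{t+1}(0, ŵ_t, …, ŵ_0). Then for every disturbance sequence w : ℕ → ℝⁿ: (a) |u_t| ≤ u_max for all t, so P_{u_max}(u_t) = u_t and the input never saturates; (b) x_t = Ψxa_t(ŵ_t, …, ŵ_0) for all t; and (c) the internal state satisfies ŵ_t = w_t for 0 ≤ t ≤ τ and ŵ_t = A^{τ+1}(ŵ_{t−τ−1} − P_{η_N}(ŵ_{t−τ−1})) + w_t for t ≥ τ+1. -/

import Mathlib

/-!
Each band `(P_{η_i} − P_{η_{i−1}}) ŵ` has sup norm at most `η_i − η_{i−1}`, so the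
input-safety bound keeps `u_t` below the saturation level and the loop evolves linearly.
All of `Ψu` and `Ψxa` are causal convolutions. The SLS conditions make
`A Ψxa_t + B Ψu_t` the one-step shift of `Ψxa_t`, except for the dead-zone term
`A^{τ+1}(ŵ_{t−τ} − P_{η_N} ŵ_{t−τ})` leaving the window of length `τ + 1`. Since `R^i_1 = I`
and the bands telescope to `P_{η_N}`, the newest term of `Ψxa_t(ŵ)` is `ŵ_t` itself, so
`ŵ_{t+1} = x_{t+1} − Ψxa_{t+1}(0, ŵ_t, …)` is exactly that dead-zone term plus `w_{t+1}`.
-/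

/-- Scalar saturation at level `η`: `sat(a,η) = sign(a)·min(|a|,η)`. -/
noncomputable def satScalar (η a : ℝ) : ℝ := Real.sign a * min |a| η

/-- Coordinatewise saturation projection (sup norm). -/
noncomputable def satProj {n : ℕ} (η : ℝ) (w : Fin n → ℝ) : Fin n → ℝ :=
  fun i => satScalar η (w i)

/-- Induced ℓ∞→ℓ∞ norm (maximum absolute row sum) of the row-wise
concatenation `[M_T M_{T-1} ⋯ M_1]`. -/
noncomputable def concatNorm {p n : ℕ} (T : ℕ) (M : ℕ → Matrix (Fin p) (Fin n) ℝ) : ℝ :=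
  ⨆ r : Fin p, ∑ k ∈ Finset.Icc 1 T, ∑ j : Fin n, |M k r j|

/-- SLS feasibility conditions for `(A, B)` with horizon `T`. -/
def SLSFeasible {n m : ℕ} (A : Matrix (Fin n) (Fin n) ℝ) (B : Matrix (Fin n) (Fin m) ℝ)
    (T : ℕ) (R : ℕ → Matrix (Fin n) (Fin n) ℝ) (M : ℕ → Matrix (Fin m) (Fin n) ℝ) : Prop :=
  R 1 = 1 ∧
  (∀ k : ℕ, 1 ≤ k → k + 1 ≤ T → R (k + 1) = A * R k + B * M k) ∧
  A * R T + B * M T = 0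

/-- The blended (input) component map:
`Ψu_t(h_{t:0}) = Σ_{i=1}^N Σ_{k=1}^{min(t+1,T)}
  M^i_k (P_{η_i} − P_{η_{i−1}})(h_{t+1−k})`. -/
noncomputable def blendOut {p n : ℕ} (Mm : ℕ → ℕ → Matrix (Fin p) (Fin n) ℝ)
    (η : ℕ → ℝ) (N T : ℕ) (h : ℕ → Fin n → ℝ) (t : ℕ) : Fin p → ℝ :=
  ∑ i ∈ Finset.Icc 1 N, ∑ k ∈ Finset.Icc 1 (min (t + 1) T),
    (Mm i k).mulVec (satProj (η i) (h (t + 1 - k)) - satProj (η (i - 1)) (h (t + 1 - k)))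

/-- The augmented (anti-windup) state component map:
`Ψxa_t(h_{t:0}) = Σ_{i=1}^N Σ_{k=1}^{min(t+1,T)}
  R^i_k (P_{η_i} − P_{η_{i−1}})(h_{t+1−k})
  + Σ_{k=1}^{min(τ+1,t+1)} A^{k−1}(h_{t+1−k} − P_{η_N}(h_{t+1−k}))`. -/
noncomputable def augXmap {n : ℕ} (R : ℕ → ℕ → Matrix (Fin n) (Fin n) ℝ)
    (A : Matrix (Fin n) (Fin n) ℝ) (η : ℕ → ℝ) (N T τ : ℕ)
    (h : ℕ → Fin n → ℝ) (t : ℕ) : Fin n → ℝ :=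
  blendOut R η N T h t +
  ∑ k ∈ Finset.Icc 1 (min (τ + 1) (t + 1)),
    (A ^ (k - 1)).mulVec (h (t + 1 - k) - satProj (η N) (h (t + 1 - k)))

open Finset Matrix Function

theorem Real.abs_sign_le_one (a : ℝ) : |Real.sign a| ≤ 1 := by
  rcases Real.sign_apply_eq a with h | h | h <;> simp [h]

theorem Real.sign_mul_abs (a : ℝ) : Real.sign a * |a| = a := by
  rcases lt_trichotomy a 0 with h | rfl | h
  · simp [Real.sign_of_neg h, abs_of_neg h]
  · simp
  · simp [Real.sign_of_pos h, abs_of_pos h]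

theorem Finset.sum_Icc_one_eq_sum_range {M : Type*} [AddCommMonoid M] (f : ℕ → M) (m : ℕ) :
    ∑ k ∈ Icc 1 m, f k = ∑ j ∈ range m, f (j + 1) := by
  rw [range_eq_Ico, sum_Ico_add' f 0 m 1, zero_add, Ico_add_one_right_eq_Icc]

section Saturation

variable {n : ℕ}

theorem satScalar_zero_left (a : ℝ) : satScalar 0 a = 0 := by
  simp [satScalar]

theorem satScalar_zero_right (η : ℝ) : satScalar η 0 = 0 := by
  simp [satScalar]

theorem satScalar_of_abs_le {η a : ℝ} (h : |a| ≤ η) : satScalar η a = a := by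
  rw [satScalar, min_eq_left h, Real.sign_mul_abs]

theorem abs_satScalar_sub_satScalar_le {η₁ η₂ : ℝ} (h : η₁ ≤ η₂) (a : ℝ) :
    |satScalar η₂ a - satScalar η₁ a| ≤ η₂ - η₁ :=
  calc |satScalar η₂ a - satScalar η₁ a| = |Real.sign a| * |min |a| η₂ - min |a| η₁| := by
        rw [satScalar, satScalar, ← mul_sub, abs_mul]
    _ ≤ 1 * |η₂ - η₁| :=
        mul_le_mul (Real.abs_sign_le_one a) (by simpa using abs_min_sub_min_le_max |a| η₂ |a| η₁)
          (abs_nonneg _) zero_le_one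
    _ = η₂ - η₁ := by rw [one_mul, abs_of_nonneg (sub_nonneg.2 h)]

theorem satProj_zero_left (v : Fin n → ℝ) : satProj 0 v = 0 :=
  funext fun i => satScalar_zero_left (v i)

theorem satProj_zero_right (η : ℝ) : satProj η (0 : Fin n → ℝ) = 0 :=
  funext fun _ => satScalar_zero_right η

theorem satProj_of_norm_le {η : ℝ} {v : Fin n → ℝ} (h : ‖v‖ ≤ η) : satProj η v = v :=
  funext fun i => satScalar_of_abs_le ((norm_le_pi_norm v i).trans h)

theorem norm_satProj_sub_satProj_le {η₁ η₂ : ℝ} (h : η₁ ≤ η₂) (v : Fin n → ℝ) :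
    ‖satProj η₂ v - satProj η₁ v‖ ≤ η₂ - η₁ :=
  (pi_norm_le_iff_of_nonneg (sub_nonneg.2 h)).2 fun i => abs_satScalar_sub_satScalar_le h (v i)

noncomputable def satBand (η : ℕ → ℝ) (i : ℕ) (v : Fin n → ℝ) : Fin n → ℝ :=
  satProj (η i) v - satProj (η (i - 1)) v

noncomputable def deadZone (η : ℝ) (v : Fin n → ℝ) : Fin n → ℝ :=
  v - satProj η v

theorem satBand_zero (η : ℕ → ℝ) (i : ℕ) : satBand η i (0 : Fin n → ℝ) = 0 := by
  simp [satBand, satProj_zero_right]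

theorem deadZone_zero (η : ℝ) : deadZone η (0 : Fin n → ℝ) = 0 := by
  simp [deadZone, satProj_zero_right]

theorem sum_satBand {η : ℕ → ℝ} (hη0 : η 0 = 0) (N : ℕ) (v : Fin n → ℝ) :
    ∑ i ∈ Icc 1 N, satBand η i v = satProj (η N) v := by
  rw [sum_Icc_one_eq_sum_range]
  simp only [satBand, Nat.add_sub_cancel]
  rw [sum_range_sub (fun i => satProj (η i) v), hη0, satProj_zero_left, sub_zero]

end Saturation

section CausalConv

variable {p n : ℕ}

noncomputable def causalConv (K : ℕ → Matrix (Fin p) (Fin n) ℝ) (L : ℕ) (v : ℕ → Fin n → ℝ)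
    (t : ℕ) : Fin p → ℝ :=
  ∑ k ∈ Icc 1 (min (t + 1) L), K k *ᵥ v (t + 1 - k)

variable (K K' : ℕ → Matrix (Fin p) (Fin n) ℝ) (L : ℕ) (v : ℕ → Fin n → ℝ) (t : ℕ)

theorem causalConv_eq_sum_range :
    causalConv K L v t = ∑ j ∈ range (min (t + 1) L), K (j + 1) *ᵥ v (t - j) := by
  simp only [causalConv, sum_Icc_one_eq_sum_range, Nat.add_sub_add_right]

theorem causalConv_zero {L : ℕ} (hL : 1 ≤ L) : causalConv K L v 0 = K 1 *ᵥ v 0 := by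
  rw [causalConv_eq_sum_range, show min (0 + 1) L = 1 by omega, sum_range_one]

theorem causalConv_eq_add_update {L : ℕ} (hL : 1 ≤ L) :
    causalConv K L v t = K 1 *ᵥ v t + causalConv K L (update v t 0) t := by
  obtain ⟨m, hm⟩ : ∃ m, min (t + 1) L = m + 1 := ⟨min (t + 1) L - 1, by omega⟩
  simp only [causalConv_eq_sum_range, hm, sum_range_succ', update_self, mulVec_zero, add_zero,
    Nat.sub_zero, zero_add, add_comm (K 1 *ᵥ v t)]
  refine congrArg (· + _) (sum_congr rfl fun j hj => ?_)
  rw [update_of_ne (by simp only [mem_range] at hj; omega)]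

theorem causalConv_succ_update {L : ℕ} (hL : 1 ≤ L) :
    causalConv K L (update v (t + 1) 0) (t + 1) =
      causalConv (fun k => K (k + 1)) (L - 1) v t := by
  obtain ⟨L, rfl⟩ : ∃ L', L = L' + 1 := ⟨L - 1, by omega⟩
  rw [causalConv_eq_sum_range, causalConv_eq_sum_range,
    show min (t + 1 + 1) (L + 1) = min (t + 1) L + 1 by omega, sum_range_succ', Nat.sub_zero,
    update_self, mulVec_zero, add_zero, Nat.add_sub_cancel]
  refine sum_congr rfl fun j hj => ?_
  rw [update_of_ne (by omega), Nat.add_sub_add_right]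

theorem causalConv_succ_length :
    causalConv K (L + 1) v t =
      causalConv K L v t + if L ≤ t then K (L + 1) *ᵥ v (t - L) else 0 := by
  rw [causalConv_eq_sum_range, causalConv_eq_sum_range]
  split_ifs with h
  · rw [show min (t + 1) (L + 1) = min (t + 1) L + 1 by omega, sum_range_succ,
      show min (t + 1) L = L by omega]
  · rw [show min (t + 1) (L + 1) = min (t + 1) L by omega, add_zero]

variable {K K'} in
theorem causalConv_congr (h : ∀ k, 1 ≤ k → k ≤ L → K k = K' k) :
    causalConv K L v t = causalConv K' L v t :=
  sum_congr rfl fun k hk => by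
    simp only [mem_Icc] at hk
    rw [h k hk.1 (hk.2.trans (min_le_right _ _))]

theorem mulVec_causalConv {q : ℕ} (A : Matrix (Fin q) (Fin p) ℝ) :
    A *ᵥ causalConv K L v t = causalConv (fun k => A * K k) L v t := by
  simp only [causalConv, mulVec_sum, mulVec_mulVec]

theorem causalConv_add :
    causalConv K L v t + causalConv K' L v t = causalConv (K + K') L v t := by
  simp only [causalConv, ← sum_add_distrib, Pi.add_apply, add_mulVec]

theorem abs_mulVec_apply_le (K : Matrix (Fin p) (Fin n) ℝ) {w : Fin n → ℝ} {c : ℝ}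
    (hw : ‖w‖ ≤ c) (r : Fin p) : |(K *ᵥ w) r| ≤ (∑ j, |K r j|) * c := by
  rw [mulVec, dotProduct, sum_mul]
  refine (abs_sum_le_sum_abs _ _).trans (sum_le_sum fun j _ => ?_)
  rw [abs_mul]
  exact mul_le_mul_of_nonneg_left ((norm_le_pi_norm w j).trans hw) (abs_nonneg _)

theorem norm_causalConv_le {c : ℝ} (hc : 0 ≤ c) (hv : ∀ s, ‖v s‖ ≤ c) :
    ‖causalConv K L v t‖ ≤ concatNorm L K * c := by
  have hnorm : 0 ≤ concatNorm L K := Real.iSup_nonneg fun _ => by positivity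
  refine (pi_norm_le_iff_of_nonneg (mul_nonneg hnorm hc)).2 fun r => ?_
  calc ‖causalConv K L v t r‖
      = |∑ k ∈ Icc 1 (min (t + 1) L), (K k *ᵥ v (t + 1 - k)) r| := by
        rw [causalConv, Finset.sum_apply, Real.norm_eq_abs]
    _ ≤ ∑ k ∈ Icc 1 (min (t + 1) L), (∑ j, |K k r j|) * c :=
        (abs_sum_le_sum_abs _ _).trans (sum_le_sum fun k _ => abs_mulVec_apply_le _ (hv _) r)
    _ ≤ ∑ k ∈ Icc 1 L, (∑ j, |K k r j|) * c :=
        sum_le_sum_of_subset_of_nonneg (Icc_subset_Icc_right (min_le_right _ _))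
          fun _ _ _ => by positivity
    _ ≤ concatNorm L K * c := by
        rw [← sum_mul]
        exact mul_le_mul_of_nonneg_right
          (le_ciSup (f := fun r => ∑ k ∈ Icc 1 L, ∑ j, |K k r j|) (Set.finite_range _).bddAbove r)
          hc

end CausalConv

theorem SLSFeasible.causalConv_succ_update {n m T : ℕ} {A : Matrix (Fin n) (Fin n) ℝ}
    {B : Matrix (Fin n) (Fin m) ℝ} {R : ℕ → Matrix (Fin n) (Fin n) ℝ}
    {M : ℕ → Matrix (Fin m) (Fin n) ℝ} (hRM : SLSFeasible A B T R M) (hT : 1 ≤ T)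
    (v : ℕ → Fin n → ℝ) (t : ℕ) :
    causalConv R T (update v (t + 1) 0) (t + 1) =
      A *ᵥ causalConv R T v t + B *ᵥ causalConv M T v t := by
  obtain ⟨-, hrec, hterm⟩ := hRM
  obtain ⟨L, rfl⟩ : ∃ L, T = L + 1 := ⟨T - 1, by omega⟩
  rw [_root_.causalConv_succ_update _ _ _ hT, mulVec_causalConv, mulVec_causalConv,
    causalConv_add, causalConv_succ_length, Pi.add_apply, hterm, zero_mulVec, ite_self, add_zero,
    Nat.add_sub_cancel]
  exact causalConv_congr _ _ _ fun k hk hkL => hrec k hk (by omega)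

theorem causalConv_pow_succ_update {n : ℕ} (A : Matrix (Fin n) (Fin n) ℝ) (L : ℕ)
    (v : ℕ → Fin n → ℝ) (t : ℕ) :
    A *ᵥ causalConv (fun k => A ^ (k - 1)) (L + 1) v t =
      causalConv (fun k => A ^ (k - 1)) (L + 1) (update v (t + 1) 0) (t + 1) +
        if L ≤ t then A ^ (L + 1) *ᵥ v (t - L) else 0 := by
  rw [causalConv_succ_update _ _ _ (by omega), mulVec_causalConv, causalConv_succ_length,
    Nat.add_sub_cancel, ← pow_succ']
  congr 1
  refine causalConv_congr _ _ _ fun k hk _ => ?_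
  rw [Nat.add_sub_cancel, ← pow_succ', Nat.sub_add_cancel hk]

theorem blendOut_eq_sum_causalConv {p n : ℕ} (M : ℕ → ℕ → Matrix (Fin p) (Fin n) ℝ)
    (η : ℕ → ℝ) (N T : ℕ) (h : ℕ → Fin n → ℝ) (t : ℕ) :
    blendOut M η N T h t = ∑ i ∈ Icc 1 N, causalConv (M i) T (satBand η i ∘ h) t :=
  rfl

theorem norm_blendOut_le {p n N : ℕ} {η : ℕ → ℝ} (hmono : ∀ i : ℕ, i < N → η i ≤ η (i + 1))
    (M : ℕ → ℕ → Matrix (Fin p) (Fin n) ℝ) (T : ℕ) (h : ℕ → Fin n → ℝ) (t : ℕ) :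
    ‖blendOut M η N T h t‖ ≤ ∑ i ∈ Icc 1 N, (η i - η (i - 1)) * concatNorm T (M i) := by
  rw [blendOut_eq_sum_causalConv]
  refine (norm_sum_le _ _).trans (sum_le_sum fun i hi => ?_)
  have hle : η (i - 1) ≤ η i := by
    simp only [mem_Icc] at hi
    simpa only [Nat.sub_add_cancel hi.1] using hmono (i - 1) (by omega)
  rw [mul_comm]
  exact norm_causalConv_le _ _ _ _ (sub_nonneg.2 hle) fun s => norm_satProj_sub_satProj_le hle _

section AntiWindup

variable {n m : ℕ} (A : Matrix (Fin n) (Fin n) ℝ) (η : ℕ → ℝ) (N T τ : ℕ)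
  (R : ℕ → ℕ → Matrix (Fin n) (Fin n) ℝ) (h : ℕ → Fin n → ℝ) (t : ℕ)

theorem augXmap_eq_blendOut_add_causalConv :
    augXmap R A η N T τ h t = blendOut R η N T h t +
      causalConv (fun k => A ^ (k - 1)) (τ + 1) (deadZone (η N) ∘ h) t := by
  rw [augXmap, causalConv, min_comm]
  rfl

variable {A η N T τ R}

theorem augXmap_zero (hT : 1 ≤ T) (hR1 : ∀ i ∈ Icc 1 N, R i 1 = 1) (hη0 : η 0 = 0) :
    augXmap R A η N T τ h 0 = h 0 := by
  have hblend : blendOut R η N T h 0 = satProj (η N) (h 0) := by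
    rw [blendOut_eq_sum_causalConv, ← sum_satBand hη0 N (h 0)]
    exact sum_congr rfl fun i hi => by rw [causalConv_zero _ _ hT, hR1 i hi, one_mulVec]; rfl
  rw [augXmap_eq_blendOut_add_causalConv, hblend, causalConv_zero _ _ (by omega)]
  simp [deadZone]

theorem augXmap_eq_add_update (hT : 1 ≤ T) (hR1 : ∀ i ∈ Icc 1 N, R i 1 = 1) (hη0 : η 0 = 0) :
    augXmap R A η N T τ h t = h t + augXmap R A η N T τ (update h t 0) t := by
  have hblend : blendOut R η N T h t =
      satProj (η N) (h t) + blendOut R η N T (update h t 0) t := by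
    rw [blendOut_eq_sum_causalConv, blendOut_eq_sum_causalConv, ← sum_satBand hη0 N (h t),
      ← sum_add_distrib]
    refine sum_congr rfl fun i hi => ?_
    rw [causalConv_eq_add_update _ _ _ hT, hR1 i hi, one_mulVec, comp_update, satBand_zero]
    rfl
  rw [augXmap_eq_blendOut_add_causalConv, augXmap_eq_blendOut_add_causalConv, hblend,
    causalConv_eq_add_update _ _ _ (by omega), comp_update, deadZone_zero]
  simp only [Nat.sub_self, pow_zero, one_mulVec, Function.comp_apply, deadZone]
  abel

theorem mulVec_augXmap_add_mulVec_blendOut {B : Matrix (Fin n) (Fin m) ℝ}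
    {M : ℕ → ℕ → Matrix (Fin m) (Fin n) ℝ} (hT : 1 ≤ T)
    (hSLS : ∀ i ∈ Icc 1 N, SLSFeasible A B T (R i) (M i)) :
    A *ᵥ augXmap R A η N T τ h t + B *ᵥ blendOut M η N T h t =
      augXmap R A η N T τ (update h (t + 1) 0) (t + 1) +
        if τ ≤ t then A ^ (τ + 1) *ᵥ deadZone (η N) (h (t - τ)) else 0 := by
  have hbands : ∀ i ∈ Icc 1 N, causalConv (R i) T (satBand η i ∘ update h (t + 1) 0) (t + 1) =
      A *ᵥ causalConv (R i) T (satBand η i ∘ h) t + B *ᵥ causalConv (M i) T (satBand η i ∘ h) t :=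
    fun i hi => by
      rw [comp_update, satBand_zero]
      exact (hSLS i hi).causalConv_succ_update hT _ t
  have htail := causalConv_pow_succ_update A τ (deadZone (η N) ∘ h) t
  rw [Function.comp_apply] at htail
  rw [augXmap_eq_blendOut_add_causalConv, augXmap_eq_blendOut_add_causalConv,
    blendOut_eq_sum_causalConv, blendOut_eq_sum_causalConv, blendOut_eq_sum_causalConv,
    mulVec_add, mulVec_sum, mulVec_sum, htail, comp_update, deadZone_zero, sum_congr rfl hbands,
    sum_add_distrib]
  abel

end AntiWindup

theorem antiwindup_internal_dynamics_general (n m T N τ : ℕ) (hT : 1 ≤ T)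
    (A : Matrix (Fin n) (Fin n) ℝ) (B : Matrix (Fin n) (Fin m) ℝ)
    (η : ℕ → ℝ) (hη0 : η 0 = 0) (hmono : ∀ i : ℕ, i < N → η i ≤ η (i + 1))
    (R : ℕ → ℕ → Matrix (Fin n) (Fin n) ℝ) (M : ℕ → ℕ → Matrix (Fin m) (Fin n) ℝ)
    (hSLS : ∀ i ∈ Finset.Icc 1 N, SLSFeasible A B T (R i) (M i))
    (umax : ℝ)
    (hsafe : ∑ i ∈ Finset.Icc 1 N, (η i - η (i - 1)) * concatNorm T (M i) ≤ umax)
    (w x wHat : ℕ → Fin n → ℝ) (u : ℕ → Fin m → ℝ)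
    (hx0 : x 0 = w 0)
    (hx : ∀ t : ℕ, 1 ≤ t →
      x t = A.mulVec (x (t - 1)) + B.mulVec (satProj umax (u (t - 1))) + w t)
    (hu : ∀ t : ℕ, u t = blendOut M η N T wHat t)
    (hwh0 : wHat 0 = x 0)
    (hwh : ∀ t : ℕ, wHat (t + 1) = x (t + 1) -
      augXmap R A η N T τ (fun j => if j = t + 1 then 0 else wHat j) (t + 1)) :
    (∀ t : ℕ, ‖u t‖ ≤ umax ∧ satProj umax (u t) = u t) ∧
    (∀ t : ℕ, x t = augXmap R A η N T τ wHat t) ∧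
    (∀ t : ℕ, t ≤ τ → wHat t = w t) ∧
    (∀ t : ℕ, τ + 1 ≤ t →
      wHat t = (A ^ (τ + 1)).mulVec
          (wHat (t - τ - 1) - satProj (η N) (wHat (t - τ - 1))) + w t) := by
  have hR1 : ∀ i ∈ Icc 1 N, R i 1 = 1 := fun i hi => (hSLS i hi).1
  have hu_le : ∀ t, ‖u t‖ ≤ umax := fun t => by
    rw [hu t]
    exact (norm_blendOut_le hmono M T wHat t).trans hsafe
  have hsat : ∀ t, satProj umax (u t) = u t := fun t => satProj_of_norm_le (hu_le t)
  have hupdate : ∀ t, (fun j => if j = t + 1 then 0 else wHat j) = update wHat (t + 1) 0 :=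
    fun t => funext fun j => (update_apply wHat (t + 1) 0 j).symm
  have hx_aug : ∀ t, x t = augXmap R A η N T τ wHat t := by
    rintro (_ | t)
    · rw [augXmap_zero wHat hT hR1 hη0, hwh0]
    · rw [augXmap_eq_add_update wHat (t + 1) hT hR1 hη0, hwh t, hupdate, sub_add_cancel]
  have hwh_succ : ∀ t, wHat (t + 1) =
      (if τ ≤ t then A ^ (τ + 1) *ᵥ deadZone (η N) (wHat (t - τ)) else 0) + w (t + 1) := by
    intro t
    rw [hwh t, hx (t + 1) (by omega), Nat.add_sub_cancel, hsat, hx_aug t, hu t,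
      mulVec_augXmap_add_mulVec_blendOut wHat t hT hSLS, hupdate]
    abel
  refine ⟨fun t => ⟨hu_le t, hsat t⟩, hx_aug, ?_, ?_⟩
  · rintro (_ | t) ht
    · rw [hwh0, hx0]
    · rw [hwh_succ, if_neg (by omega), zero_add]
  · rintro (_ | t) ht
    · omega
    · rw [hwh_succ, if_pos (by omega), show t + 1 - τ - 1 = t - τ by omega]
      rfl

/-- Internal dynamics of the augmented anti-windup controller
under input saturation. Under the SLS feasibility conditions for each
`(Rⁱ, Mⁱ)` and the input-safety bound, the saturated closed loop with the
augmented system-level controller satisfies: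
(a) `‖u_t‖ ≤ u_max` (so the input never saturates);
(b) `x_t = Ψxa_t(ŵ_t, …, ŵ_0)`;
(c) `ŵ_t = w_t` for `t ≤ τ` and
`ŵ_t = A^{τ+1}(ŵ_{t−τ−1} − P_{η_N}(ŵ_{t−τ−1})) + w_t` for `t ≥ τ+1`. -/
theorem antiwindup_internal_dynamics (n m T N τ : ℕ) (hT : 1 ≤ T) (hN : 1 ≤ N)
    (A : Matrix (Fin n) (Fin n) ℝ) (B : Matrix (Fin n) (Fin m) ℝ)
    (η : ℕ → ℝ) (hη0 : η 0 = 0) (hmono : ∀ i : ℕ, i < N → η i ≤ η (i + 1))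
    (R : ℕ → ℕ → Matrix (Fin n) (Fin n) ℝ) (M : ℕ → ℕ → Matrix (Fin m) (Fin n) ℝ)
    (hSLS : ∀ i ∈ Finset.Icc 1 N, SLSFeasible A B T (R i) (M i))
    (umax : ℝ)
    (hsafe : ∑ i ∈ Finset.Icc 1 N, (η i - η (i - 1)) * concatNorm T (M i) ≤ umax)
    (w x wHat : ℕ → Fin n → ℝ) (u : ℕ → Fin m → ℝ)
    (hx0 : x 0 = w 0)
    (hx : ∀ t : ℕ, 1 ≤ t →
      x t = A.mulVec (x (t - 1)) + B.mulVec (satProj umax (u (t - 1))) + w t)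
    (hu : ∀ t : ℕ, u t = blendOut M η N T wHat t)
    (hwh0 : wHat 0 = x 0)
    (hwh : ∀ t : ℕ, wHat (t + 1) = x (t + 1) -
      augXmap R A η N T τ (fun j => if j = t + 1 then 0 else wHat j) (t + 1)) :
    (∀ t : ℕ, ‖u t‖ ≤ umax ∧ satProj umax (u t) = u t) ∧
    (∀ t : ℕ, x t = augXmap R A η N T τ wHat t) ∧
    (∀ t : ℕ, t ≤ τ → wHat t = w t) ∧
    (∀ t : ℕ, τ + 1 ≤ t →
      wHat t = (A ^ (τ + 1)).mulVec
          (wHat (t - τ - 1) - satProj (η N) (wHat (t - τ - 1))) + w t) :=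
  antiwindup_internal_dynamics_general n m T N τ hT A B η hη0 hmono R M hSLS umax hsafe w x wHat u
    hx0 hx hu hwh0 hwh
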